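/- For the LATE weight, E[α(W)|W_s] = α_s(W_s): if Z is a {0,1}-valued random variable, π(X,A) = P(Z=1|X,A) ∈ (0,1) a.s. and π_s(X) = P(Z=1|X) ∈ (0,1) a.s., then E[Z/π(X,A) - (1-Z)/(1-π(X,A)) | Z, X] = Z/π_s(X) - (1-Z)/(1-π_s(X)) a.s. -/

import Mathlib

/-!
Write `π = μ[Z|m]`. For `C ∈ m`, `∫_C Z / π = μ C`: testing the defining property of `π` against
the `m`-measurable function `1_C / π` (harmless in `ℝ≥0∞`, where no integrability is needed) turns
`Z / π` into `π / π = 1`; likewise `∫_C (1 - Z) / (1 - π) = μ C`. Hence, for `Z ∈ {0, 1}`, the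
weight integrates over `Z⁻¹' S ∩ C` to `(1_S 1 - 1_S 0) μ C`, whatever the σ-algebra `m ∋ C`.
With `m = mXA` and `m = mX` the two weights therefore agree on the rectangles `Z⁻¹' S ∩ C`,
`C ∈ mX`, a π-system generating `σ(Z) ⊔ mX`; by Dynkin's theorem they have the same integrals over
every set of `σ(Z) ⊔ mX`, and the short weight is `σ(Z) ⊔ mX`-measurable.
-/

open MeasureTheory
open scoped ENNReal

section Rectangles

variable {Ω : Type*} (m₁ m₂ : MeasurableSpace Ω)

theorem isPiSystem_image2_inter_measurableSet :
    IsPiSystem (Set.image2 (· ∩ ·) {t | MeasurableSet[m₁] t} {u | MeasurableSet[m₂] u}) := by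
  rintro _ ⟨t, ht, u, hu, rfl⟩ _ ⟨t', ht', u', hu', rfl⟩ -
  exact ⟨t ∩ t', ht.inter ht', u ∩ u', hu.inter hu', (Set.inter_inter_inter_comm t u t' u').symm⟩

theorem univ_mem_image2_inter_measurableSet :
    Set.univ ∈ Set.image2 (· ∩ ·) {t | MeasurableSet[m₁] t} {u | MeasurableSet[m₂] u} :=
  ⟨_, @MeasurableSet.univ _ m₁, _, @MeasurableSet.univ _ m₂, Set.inter_univ _⟩

theorem generateFrom_image2_inter_measurableSet :
    MeasurableSpace.generateFrom
      (Set.image2 (· ∩ ·) {t | MeasurableSet[m₁] t} {u | MeasurableSet[m₂] u}) = m₁ ⊔ m₂ := by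
  refine le_antisymm (MeasurableSpace.generateFrom_le ?_) (sup_le ?_ ?_)
  · rintro _ ⟨t, ht, u, hu, rfl⟩
    exact (le_sup_left (b := m₂) _ ht).inter (le_sup_right (a := m₁) _ hu)
  · exact fun t ht => MeasurableSpace.measurableSet_generateFrom
      ⟨t, ht, Set.univ, MeasurableSet.univ, Set.inter_univ t⟩
  · exact fun u hu => MeasurableSpace.measurableSet_generateFrom
      ⟨Set.univ, MeasurableSet.univ, u, hu, Set.univ_inter u⟩

end Rectangles

namespace MeasureTheory

variable {Ω : Type*} {m m0 : MeasurableSpace Ω} {μ : Measure Ω}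

theorem setIntegral_eq_setIntegral_of_isPiSystem {s : Set (Set Ω)} (hm : m ≤ m0)
    (h_eq : m = MeasurableSpace.generateFrom s) (h_inter : IsPiSystem s) (h_univ : Set.univ ∈ s)
    {f g : Ω → ℝ} (hf : Integrable f μ) (hg : Integrable g μ)
    (basic : ∀ t ∈ s, ∫ x in t, f x ∂μ = ∫ x in t, g x ∂μ) {t : Set Ω}
    (ht : MeasurableSet[m] t) : ∫ x in t, f x ∂μ = ∫ x in t, g x ∂μ := by
  induction t, ht using MeasurableSpace.induction_on_inter h_eq h_inter with
  | empty => simp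
  | basic t ht => exact basic t ht
  | compl t ht h =>
    have hfg : ∫ x, f x ∂μ = ∫ x, g x ∂μ := by simpa using basic _ h_univ
    rw [setIntegral_compl (hm t ht) hf, setIntegral_compl (hm t ht) hg, h, hfg]
  | iUnion t hd ht h =>
    rw [integral_iUnion (fun i => hm _ (ht i)) hd hf.integrableOn,
      integral_iUnion (fun i => hm _ (ht i)) hd hg.integrableOn]
    exact tsum_congr h

theorem lintegral_ofReal_condExp_mul (hm : m ≤ m0) [SigmaFinite (μ.trim hm)] {W : Ω → ℝ}
    (hW : Integrable W μ) (hW0 : 0 ≤ᵐ[μ] W) {g : Ω → ℝ≥0∞} (hg : Measurable[m] g) :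
    ∫⁻ ω, ENNReal.ofReal (μ[W|m] ω) * g ω ∂μ = ∫⁻ ω, ENNReal.ofReal (W ω) * g ω ∂μ := by
  have h_trim : (μ.withDensity fun ω => ENNReal.ofReal (μ[W|m] ω)).trim hm
      = (μ.withDensity fun ω => ENNReal.ofReal (W ω)).trim hm := by
    refine @Measure.ext _ m _ _ fun s hs => ?_
    rw [trim_measurableSet_eq hm hs, trim_measurableSet_eq hm hs,
      withDensity_apply (μ := μ) _ (hm s hs), withDensity_apply (μ := μ) _ (hm s hs),
      ← ofReal_integral_eq_lintegral_ofReal integrable_condExp.integrableOn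
        (ae_restrict_of_ae (condExp_nonneg hW0)),
      ← ofReal_integral_eq_lintegral_ofReal hW.integrableOn (ae_restrict_of_ae hW0),
      setIntegral_condExp hm hW hs]
  have h_density {f : Ω → ℝ} (hf : AEStronglyMeasurable f μ) :
      ∫⁻ ω, ENNReal.ofReal (f ω) * g ω ∂μ
        = ∫⁻ ω, g ω ∂(μ.withDensity fun ω => ENNReal.ofReal (f ω)).trim hm := by
    rw [lintegral_trim hm hg, lintegral_withDensity_eq_lintegral_mul₀
      hf.aemeasurable.ennreal_ofReal (hg.mono hm le_rfl).aemeasurable]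
    rfl
  rw [h_density integrable_condExp.aestronglyMeasurable, h_density hW.aestronglyMeasurable, h_trim]

section InverseWeighting

variable (hm : m ≤ m0) {W : Ω → ℝ}
include hm

theorem lintegral_ofReal_div_condExp [SigmaFinite (μ.trim hm)] (hW : Integrable W μ)
    (hW0 : 0 ≤ᵐ[μ] W) (hp : ∀ᵐ ω ∂μ, 0 < μ[W|m] ω) {C : Set Ω} (hC : MeasurableSet[m] C) :
    ∫⁻ ω in C, ENNReal.ofReal (W ω / μ[W|m] ω) ∂μ = μ C := by
  set g : Ω → ℝ≥0∞ := C.indicator fun ω => ENNReal.ofReal (μ[W|m] ω)⁻¹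
  have hg : Measurable[m] g :=
    (measurable_inv.comp stronglyMeasurable_condExp.measurable).ennreal_ofReal.indicator hC
  calc ∫⁻ ω in C, ENNReal.ofReal (W ω / μ[W|m] ω) ∂μ
      = ∫⁻ ω, ENNReal.ofReal (W ω) * g ω ∂μ := by
        rw [← lintegral_indicator (hm C hC)]
        refine lintegral_congr_ae ?_
        filter_upwards [hW0] with ω hω
        by_cases hωC : ω ∈ C <;> simp [g, hωC, div_eq_mul_inv, ENNReal.ofReal_mul hω]
    _ = ∫⁻ ω, ENNReal.ofReal (μ[W|m] ω) * g ω ∂μ :=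
        (lintegral_ofReal_condExp_mul hm hW hW0 hg).symm
    _ = ∫⁻ ω, C.indicator 1 ω ∂μ := by
        refine lintegral_congr_ae ?_
        filter_upwards [hp] with ω hω
        by_cases hωC : ω ∈ C <;> simp [g, hωC, ← ENNReal.ofReal_mul hω.le, hω.ne']
    _ = μ C := lintegral_indicator_one (hm C hC)

variable [IsFiniteMeasure μ] (hW : Integrable W μ) (hW0 : 0 ≤ᵐ[μ] W)
  (hp : ∀ᵐ ω ∂μ, 0 < μ[W|m] ω)
include hW hW0 hp

theorem integrable_div_condExp : Integrable (fun ω => W ω / μ[W|m] ω) μ := by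
  have hnn : 0 ≤ᵐ[μ] fun ω => W ω / μ[W|m] ω := by
    filter_upwards [hW0, condExp_nonneg (m := m) hW0] with ω h1 h2 using div_nonneg h1 h2
  refine ⟨(hW.aemeasurable.div
    (stronglyMeasurable_condExp.mono hm).measurable.aemeasurable).aestronglyMeasurable, ?_⟩
  rw [hasFiniteIntegral_iff_ofReal hnn, ← setLIntegral_univ,
    lintegral_ofReal_div_condExp hm hW hW0 hp MeasurableSet.univ]
  exact measure_lt_top μ _

theorem setIntegral_div_condExp {C : Set Ω} (hC : MeasurableSet[m] C) :
    ∫ ω in C, W ω / μ[W|m] ω ∂μ = μ.real C := by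
  rw [integral_eq_lintegral_of_nonneg_ae, lintegral_ofReal_div_condExp hm hW hW0 hp hC]
  · rfl
  · filter_upwards [ae_restrict_of_ae hW0, ae_restrict_of_ae (condExp_nonneg (m := m) hW0)]
      with ω h1 h2 using div_nonneg h1 h2
  · exact (integrable_div_condExp hm hW hW0 hp).aestronglyMeasurable.restrict

end InverseWeighting

section Complement

variable [IsFiniteMeasure μ] (hm : m ≤ m0) {Z : Ω → ℝ} (hZ : Integrable Z μ)
include hm hZ

theorem condExp_one_sub : μ[fun ω => 1 - Z ω|m] =ᵐ[μ] fun ω => 1 - μ[Z|m] ω := by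
  filter_upwards [condExp_sub (m := m) (integrable_const 1) hZ] with ω hω
  rw [show (fun ω => 1 - Z ω) = (fun _ => (1 : ℝ)) - Z from rfl, hω, Pi.sub_apply,
    condExp_const hm]

variable (hZ1 : Z ≤ᵐ[μ] 1) (hπ1 : ∀ᵐ ω ∂μ, μ[Z|m] ω < 1)
include hZ1 hπ1

theorem integrable_one_sub_div_one_sub_condExp :
    Integrable (fun ω => (1 - Z ω) / (1 - μ[Z|m] ω)) μ := by
  have h := condExp_one_sub hm hZ
  have hp : ∀ᵐ ω ∂μ, 0 < μ[fun ω => 1 - Z ω|m] ω := by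
    filter_upwards [h, hπ1] with ω hω hω1 using hω ▸ sub_pos.2 hω1
  refine (integrable_div_condExp (W := fun ω => 1 - Z ω) hm ((integrable_const 1).sub hZ)
    (hZ1.mono fun ω hω => sub_nonneg.2 hω) hp).congr ?_
  filter_upwards [h] with ω hω
  rw [hω]

theorem setIntegral_one_sub_div_one_sub_condExp {C : Set Ω} (hC : MeasurableSet[m] C) :
    ∫ ω in C, (1 - Z ω) / (1 - μ[Z|m] ω) ∂μ = μ.real C := by
  have h := condExp_one_sub hm hZ
  have hp : ∀ᵐ ω ∂μ, 0 < μ[fun ω => 1 - Z ω|m] ω := by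
    filter_upwards [h, hπ1] with ω hω hω1 using hω ▸ sub_pos.2 hω1
  rw [← setIntegral_div_condExp (W := fun ω => 1 - Z ω) hm ((integrable_const 1).sub hZ)
    (hZ1.mono fun ω hω => sub_nonneg.2 hω) hp hC]
  refine integral_congr_ae (ae_restrict_of_ae ?_)
  filter_upwards [h] with ω hω
  rw [hω]

end Complement

/-- The paper's weight `α`, with propensity score `π = μ[Z|m]`. -/
noncomputable def lateWeight (μ : Measure Ω) (m : MeasurableSpace Ω) (Z : Ω → ℝ) : Ω → ℝ :=
  fun ω => Z ω / μ[Z|m] ω - (1 - Z ω) / (1 - μ[Z|m] ω)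

theorem Measurable.lateWeight {m' : MeasurableSpace Ω} (hm : m ≤ m') {Z : Ω → ℝ}
    (hZ : Measurable[m'] Z) : Measurable[m'] (lateWeight μ m Z) := by
  have hπ : Measurable[m'] (μ[Z|m]) := stronglyMeasurable_condExp.measurable.mono hm le_rfl
  exact (hZ.div hπ).sub ((measurable_const.sub hZ).div (measurable_const.sub hπ))

theorem integrable_of_ae_eq_zero_or_one [IsFiniteMeasure μ] {Z : Ω → ℝ}
    (hZ : AEStronglyMeasurable Z μ) (hZ01 : ∀ᵐ ω ∂μ, Z ω = 0 ∨ Z ω = 1) : Integrable Z μ :=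
  Integrable.of_bound hZ 1 <| hZ01.mono fun ω h => by rcases h with h | h <;> simp [h]

section Bernoulli

variable [IsFiniteMeasure μ] (hm : m ≤ m0) {Z : Ω → ℝ} (hZ : Measurable Z)
  (hZ01 : ∀ᵐ ω ∂μ, Z ω = 0 ∨ Z ω = 1) (hπ : ∀ᵐ ω ∂μ, 0 < μ[Z|m] ω ∧ μ[Z|m] ω < 1)
include hm hZ hZ01 hπ

theorem integrable_lateWeight : Integrable (lateWeight μ m Z) μ := by
  have hZ0 : 0 ≤ᵐ[μ] Z := hZ01.mono fun ω h => by rcases h with h | h <;> simp [h]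
  have hZ1 : Z ≤ᵐ[μ] 1 := hZ01.mono fun ω h => by rcases h with h | h <;> simp [h]
  have hZint := integrable_of_ae_eq_zero_or_one hZ.aestronglyMeasurable hZ01
  exact (integrable_div_condExp hm hZint hZ0 (hπ.mono fun _ h => h.1)).sub
    (integrable_one_sub_div_one_sub_condExp hm hZint hZ1 (hπ.mono fun _ h => h.2))

theorem setIntegral_lateWeight_preimage_inter {S : Set ℝ} (hS : MeasurableSet S) {C : Set Ω}
    (hC : MeasurableSet[m] C) :
    ∫ ω in Z ⁻¹' S ∩ C, lateWeight μ m Z ω ∂μ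
      = (S.indicator 1 1 - S.indicator 1 0) * μ.real C := by
  have hZ0 : 0 ≤ᵐ[μ] Z := hZ01.mono fun ω h => by rcases h with h | h <;> simp [h]
  have hZ1 : Z ≤ᵐ[μ] 1 := hZ01.mono fun ω h => by rcases h with h | h <;> simp [h]
  have hZint := integrable_of_ae_eq_zero_or_one hZ.aestronglyMeasurable hZ01
  have hI₁ := integrable_div_condExp hm hZint hZ0 (hπ.mono fun _ h => h.1)
  have hI₀ := integrable_one_sub_div_one_sub_condExp hm hZint hZ1 (hπ.mono fun _ h => h.2)
  have h_split : (Z ⁻¹' S).indicator (lateWeight μ m Z) =ᵐ[μ] fun ω =>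
      S.indicator 1 1 * (Z ω / μ[Z|m] ω) - S.indicator 1 0 * ((1 - Z ω) / (1 - μ[Z|m] ω)) := by
    filter_upwards [hZ01] with ω h
    rcases h with h | h <;> by_cases h0 : (0 : ℝ) ∈ S <;> by_cases h1 : (1 : ℝ) ∈ S <;>
      simp [lateWeight, h, h0, h1]
  rw [Set.inter_comm, ← setIntegral_indicator (hZ hS),
    integral_congr_ae (ae_restrict_of_ae h_split),
    integral_sub (hI₁.const_mul _).integrableOn (hI₀.const_mul _).integrableOn,
    integral_const_mul, integral_const_mul,
    setIntegral_div_condExp hm hZint hZ0 (hπ.mono fun _ h => h.1) hC,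
    setIntegral_one_sub_div_one_sub_condExp hm hZint hZ1 (hπ.mono fun _ h => h.2) hC, sub_mul]

end Bernoulli

end MeasureTheory

/-- For the LATE weight, E[α(W)|W_s] = α_s(W_s): with Z Bernoulli, long propensity
π = E[Z|σ(X,A)] and short propensity π_s = E[Z|σ(X)], both in (0,1) a.s.,
E[Z/π - (1-Z)/(1-π) | σ(Z,X)] = Z/π_s - (1-Z)/(1-π_s) a.s. -/
theorem stmt_13 {Ω : Type*} {m0 : MeasurableSpace Ω} (μ : Measure Ω) [IsProbabilityMeasure μ]
    (Z : Ω → ℝ) (hZmeas : Measurable Z) (hZ01 : ∀ᵐ ω ∂μ, Z ω = 0 ∨ Z ω = 1)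
    {mX mXA : MeasurableSpace Ω} (hmX : mX ≤ mXA) (hmXA : mXA ≤ m0)
    (hπ : ∀ᵐ ω ∂μ, 0 < (μ[Z|mXA]) ω ∧ (μ[Z|mXA]) ω < 1)
    (hπs : ∀ᵐ ω ∂μ, 0 < (μ[Z|mX]) ω ∧ (μ[Z|mX]) ω < 1)
    (mZX : MeasurableSpace Ω)
    (hmZX : mZX = MeasurableSpace.comap Z (borel ℝ) ⊔ mX) (hmZXle : mZX ≤ m0) :
    μ[(fun ω => Z ω / (μ[Z|mXA]) ω - (1 - Z ω) / (1 - (μ[Z|mXA]) ω)) | mZX] =ᵐ[μ]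
      fun ω => Z ω / (μ[Z|mX]) ω - (1 - Z ω) / (1 - (μ[Z|mX]) ω) := by
  subst hmZX
  have hmX0 : mX ≤ m0 := hmX.trans hmXA
  have hint := integrable_lateWeight hmXA hZmeas hZ01 hπ
  have hint_s := integrable_lateWeight hmX0 hZmeas hZ01 hπs
  have hmeas_s : Measurable[.comap Z (borel ℝ) ⊔ mX] (lateWeight μ mX Z) :=
    ((comap_measurable Z).mono le_sup_left le_rfl).lateWeight le_sup_right
  have h_rect : ∀ t ∈ Set.image2 (· ∩ ·) {t | MeasurableSet[.comap Z (borel ℝ)] t}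
      {u | MeasurableSet[mX] u},
      ∫ ω in t, lateWeight μ mX Z ω ∂μ = ∫ ω in t, lateWeight μ mXA Z ω ∂μ := by
    rintro _ ⟨_, ⟨S, hS, rfl⟩, C, hC, rfl⟩
    rw [setIntegral_lateWeight_preimage_inter hmX0 hZmeas hZ01 hπs hS hC,
      setIntegral_lateWeight_preimage_inter hmXA hZmeas hZ01 hπ hS (hmX C hC)]
  refine (ae_eq_condExp_of_forall_setIntegral_eq hmZXle hint (fun _ _ _ => hint_s.integrableOn)
    (fun s hs _ => ?_) hmeas_s.aestronglyMeasurable).symm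
  exact setIntegral_eq_setIntegral_of_isPiSystem hmZXle
    (generateFrom_image2_inter_measurableSet _ _).symm (isPiSystem_image2_inter_measurableSet _ _)
    (univ_mem_image2_inter_measurableSet _ _) hint_s hint h_rect hs
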